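/- Let θ : A → A^λ be a primitive substitution of constant length λ ≥ 2 with θ(a₀)_0 = a₀ for some a₀ ∈ A, let h = h(θ) be its height and θ^{(h)} its pure base. Then c(θ) = h(θ) · c(θ^{(h)}); in particular, h(θ) divides c(θ). -/

import Mathlib

open Filter Topology

/-- `substIter θ l k a j` is the `j`-th letter of `θ^k(a)`, where `θ : A → A^l` is a
substitution of constant length `l` (the letters of `θ(a)` being `θ a 0, …, θ a (l-1)`).
It is meaningful for `j < l ^ k` and satisfies
`θ^{k+1}(a)_{j'·l + r} = θ(θ^k(a)_{j'})_r`. -/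
def substIter {A : Type*} (θ : A → ℕ → A) (l : ℕ) : ℕ → A → ℕ → A
  | 0, a, _ => a
  | k + 1, a, j => θ (substIter θ l k a (j / l)) (j % l)

/-- A substitution of constant length `l` is primitive if some iterate of every letter
contains every letter. -/
def SubstPrimitive {A : Type*} (θ : A → ℕ → A) (l : ℕ) : Prop :=
  ∃ k, 1 ≤ k ∧ ∀ a b : A, ∃ j, j < l ^ k ∧ substIter θ l k a j = b

/-- Primitivity of a substitution restricted to a sub-alphabet `S`. -/
def SubstPrimitiveOn {A : Type*} (θ : A → ℕ → A) (l : ℕ) (S : Set A) : Prop :=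
  ∃ k, 1 ≤ k ∧ ∀ a ∈ S, ∀ b ∈ S, ∃ j, j < l ^ k ∧ substIter θ l k a j = b

/-- The column number of a substitution of constant length `l`, restricted to the
sub-alphabet `S`: the minimal cardinality of a column set `{θ^k(a)_j : a ∈ S}`. -/
noncomputable def columnNumberOn {A : Type*} (θ : A → ℕ → A) (l : ℕ) (S : Set A) : ℕ :=
  sInf { n : ℕ | ∃ k, 1 ≤ k ∧ ∃ j, j < l ^ k ∧
    ((fun a => substIter θ l k a j) '' S).ncard = n }

/-- The column number `c(θ)` of a substitution of constant length `l`. -/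
noncomputable def columnNumber {A : Type*} (θ : A → ℕ → A) (l : ℕ) : ℕ :=
  columnNumberOn θ l Set.univ

/-- The one-sided fixed point `u` of `θ` obtained by iterating `θ` at a letter `a₀`
with `θ(a₀)_0 = a₀`: `u n = θ^k(a₀)_n` for any `k` with `n < l^k`. -/
def substFixedPoint {A : Type*} (θ : A → ℕ → A) (l : ℕ) (a₀ : A) : ℕ → A :=
  fun n => substIter θ l (n + 1) a₀ n

/-- The height `h(θ)`: the largest `m ≥ 1` coprime to `l` dividing
`gcd {r ≥ 1 : u[r] = u[0]}`, i.e. dividing every return time of `u[0]`. -/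
noncomputable def substHeight {A : Type*} (θ : A → ℕ → A) (l : ℕ) (a₀ : A) : ℕ :=
  sSup { m : ℕ | 1 ≤ m ∧ Nat.Coprime m l ∧
    ∀ r : ℕ, 1 ≤ r → substFixedPoint θ l a₀ r = substFixedPoint θ l a₀ 0 → m ∣ r }

/-- The subshift `X_θ ⊆ A^ℤ`: all `x` each of whose finite blocks occurs in some
`θ^k(a)`. -/
def subshift {A : Type*} (θ : A → ℕ → A) (l : ℕ) : Set (ℤ → A) :=
  { x | ∀ (i : ℤ) (n : ℕ), ∃ k, 1 ≤ k ∧ ∃ a : A, ∃ j : ℕ, j + n ≤ l ^ k ∧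
      ∀ m : ℕ, m < n → x (i + (m : ℤ)) = substIter θ l k a (j + m) }

/-- The subshift `X_x ⊆ A^ℤ` generated by a one-sided sequence `x ∈ A^ℕ`: all `z`
each of whose finite blocks occurs in `x`. -/
def subshiftOf {A : Type*} (x : ℕ → A) : Set (ℤ → A) :=
  { z | ∀ (i : ℤ) (n : ℕ), ∃ j : ℕ, ∀ m : ℕ, m < n → z (i + (m : ℤ)) = x (j + m) }

/-- The left shift on `A^ℤ`. -/
def shift {A : Type*} (x : ℤ → A) : ℤ → A := fun n => x (n + 1)

/-- A bounded arithmetic function. -/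
def BoundedSeq (u : ℕ → ℂ) : Prop := ∃ C : ℝ, ∀ n, ‖u n‖ ≤ C

/-- A multiplicative arithmetic function: `u(mn) = u(m)u(n)` for coprime `m, n`. -/
def MultiplicativeSeq (u : ℕ → ℂ) : Prop :=
  ∀ m n : ℕ, Nat.Coprime m n → u (m * n) = u m * u n

/-- An aperiodic arithmetic function: zero mean along every arithmetic progression. -/
def AperiodicSeq (u : ℕ → ℂ) : Prop :=
  ∀ a b : ℕ, 1 ≤ a →
    Tendsto (fun N : ℕ => (N : ℂ)⁻¹ * ∑ n ∈ Finset.Icc 1 N, u (a * n + b)) atTop (nhds 0)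

/-- The Weyl pseudo-metric
`d_W(x,y) = limsup_N sup_{ℓ ≥ 1} (1/N)·#{ℓ ≤ n < ℓ+N : x n ≠ y n}`. -/
noncomputable def weylDist {B : Type*} (x y : ℕ → B) : ℝ :=
  limsup (fun N : ℕ =>
    ⨆ ℓ : ℕ, ⨆ _ : 1 ≤ ℓ,
      (({ n : ℕ | ℓ ≤ n ∧ n < ℓ + N ∧ x n ≠ y n }.ncard : ℝ) / N)) atTop

/-- A periodic sequence. -/
def IsPeriodicSeq {B : Type*} (v : ℕ → B) : Prop :=
  ∃ p, 1 ≤ p ∧ ∀ n, v (n + p) = v n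

/-- Weyl rational almost periodicity: a `d_W`-limit of periodic sequences. -/
def WRAPSeq {B : Type*} (x : ℕ → B) : Prop :=
  ∀ ε : ℝ, 0 < ε → ∃ v : ℕ → B, IsPeriodicSeq v ∧ weylDist x v < ε

/-- The family `𝒳(θ)` of column sets realizing the column number of `θ`. -/
noncomputable def columnSets {A : Type*} (θ : A → ℕ → A) (l : ℕ) : Set (Set A) :=
  { M | (∃ k, 1 ≤ k ∧ ∃ j, j < l ^ k ∧ M = (fun a => substIter θ l k a j) '' Set.univ) ∧
        M.ncard = columnNumber θ l }

/-- The synchronizing part `~θ` of `θ`, as a substitution on subsets of the alphabet: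
`~θ(M)_j = {θ(a)_j : a ∈ M}`. -/
def synchPart {A : Type*} (θ : A → ℕ → A) : Set A → ℕ → Set A :=
  fun M j => (fun a => θ a j) '' M

/-- The joining `θ ∨ ζ` of two substitutions of the same constant length. -/
def joinSub {A B : Type*} (θ : A → ℕ → A) (ζ : B → ℕ → B) : A × B → ℕ → A × B :=
  fun p j => (θ p.1 j, ζ p.2 j)

/-- The pure base `θ^{(h)}` of `θ`: a substitution of length `l` on blocks of length `h`,
`θ^{(h)}(w)_j = θ(w)[jh, (j+1)h−1]`, where `θ(w)` is the concatenation
`θ(w_0)…θ(w_{h-1})`. -/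
def pureBase {A : Type*} (θ : A → ℕ → A) (l h : ℕ) : (Fin h → A) → ℕ → (Fin h → A) :=
  fun w j i => θ (w ⟨(j * h + i.val) / l % h, Nat.mod_lt _ i.pos⟩) ((j * h + i.val) % l)

/-- Iterated cocycle `σ^{(k)}`, with `σ^{(1)} = σ` and
`σ^{(k+1)}(M, j₁·l + j₂) = σ^{(k)}(M, j₁) ∘ σ(~θ^k(M)_{j₁}, j₂)`. -/
def sigmaIter {X : Type*} {c : ℕ} (tilde : X → ℕ → X)
    (σ : X → ℕ → Equiv.Perm (Fin c)) (l : ℕ) : ℕ → X → ℕ → Equiv.Perm (Fin c)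
  | 0, _, _ => 1
  | k + 1, M, j =>
      sigmaIter tilde σ l k M (j / l) * σ (substIter tilde l k M (j / l)) (j % l)

/-- The group extension substitution `Θ̂(g, M)_j = (g ∘ σ(M,j), ~θ(M)_j)`. -/
def hatTheta {X : Type*} {c : ℕ} (tilde : X → ℕ → X)
    (σ : X → ℕ → Equiv.Perm (Fin c)) : Equiv.Perm (Fin c) × X → ℕ → Equiv.Perm (Fin c) × X :=
  fun p j => (p.1 * σ p.2 j, tilde p.2 j)

/-- The group `G` generated by the cocycle values `σ(M, j)`, `M ∈ 𝒳`, `j < l`. -/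
def cocycleGroup {X : Type*} {c : ℕ} (σ : X → ℕ → Equiv.Perm (Fin c)) (l : ℕ) :
    Subgroup (Equiv.Perm (Fin c)) :=
  Subgroup.closure { g | ∃ M : X, ∃ j, j < l ∧ g = σ M j }

/-!
Let `u` be the fixed point and `h` the height. A letter occurs in `u` only at positions of a
single residue class modulo `h` (after any letter, `a₀` recurs `l ^ k` positions later, and `l` is
a unit modulo `h`), so the classes `A_c = residueLetters u h c`, `c : ZMod h`, partition the
alphabet. Since `θ^k(A_c)_j ⊆ A_{c l^k + j}` and `c ↦ c l^k + j` permutes `ZMod h`, every column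
of `θ` is the disjoint union of its restrictions to the classes, and all classes have the same
minimal column size `γ`. Further columns are injective on a minimal column, so some column is
minimal on all classes at once, and `c(θ) = h γ`. The columns of the pure base consist of
`h`-blocks of `u`: their first letters form a column of a class, and along a minimal column of
`A_0` the blocks are injective images of its letters, so `c(θ^{(h)}) = γ`.
-/

open Set

theorem mul_pow_add_lt_pow_add {l k₁ k₂ j₁ j₂ : ℕ} (h₁ : j₁ < l ^ k₁) (h₂ : j₂ < l ^ k₂) :
    j₁ * l ^ k₂ + j₂ < l ^ (k₁ + k₂) :=
  calc j₁ * l ^ k₂ + j₂ < (j₁ + 1) * l ^ k₂ := by rw [add_mul, one_mul]; omega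
    _ ≤ l ^ k₁ * l ^ k₂ := Nat.mul_le_mul_right _ h₁
    _ = l ^ (k₁ + k₂) := (pow_add l k₁ k₂).symm

section SubstIter

variable {A : Type*} (θ : A → ℕ → A) (l : ℕ)

theorem substIter_add (k₁ k₂ : ℕ) (a : A) (j : ℕ) :
    substIter θ l (k₁ + k₂) a j =
      substIter θ l k₂ (substIter θ l k₁ a (j / l ^ k₂)) (j % l ^ k₂) := by
  induction k₂ generalizing j with
  | zero => simp [substIter]
  | succ k ih =>
    rw [← add_assoc, substIter, ih, substIter, pow_succ', Nat.div_div_eq_div_mul,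
      Nat.mod_mul_right_div_self, Nat.mod_mul_right_mod]

theorem substIter_mul_add (k₁ k₂ : ℕ) (a : A) {j₁ j₂ : ℕ} (h₂ : j₂ < l ^ k₂) :
    substIter θ l (k₁ + k₂) a (j₁ * l ^ k₂ + j₂) =
      substIter θ l k₂ (substIter θ l k₁ a j₁) j₂ := by
  have hpos : 0 < l ^ k₂ := by omega
  rw [substIter_add, Nat.add_comm, Nat.add_mul_div_right _ _ hpos, Nat.div_eq_of_lt h₂, zero_add,
    Nat.add_mul_mod_self_right, Nat.mod_eq_of_lt h₂]

variable {θ l}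

theorem substIter_zero_eq_self {a₀ : A} (ha₀ : θ a₀ 0 = a₀) (k : ℕ) :
    substIter θ l k a₀ 0 = a₀ := by
  induction k with
  | zero => rfl
  | succ k ih => simp [substIter, ih, ha₀]

end SubstIter

def substColumn {A : Type*} (θ : A → ℕ → A) (l k j : ℕ) (S : Set A) : Set A :=
  (fun a => substIter θ l k a j) '' S

section ColumnNumber

variable {A : Type*} {θ : A → ℕ → A} {l : ℕ} {S T : Set A}

theorem substColumn_add {k₁ k₂ j₁ j₂ : ℕ} (h₂ : j₂ < l ^ k₂) :
    substColumn θ l (k₁ + k₂) (j₁ * l ^ k₂ + j₂) S =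
      substColumn θ l k₂ j₂ (substColumn θ l k₁ j₁ S) := by
  simp only [substColumn, image_image, substIter_mul_add θ l k₁ k₂ _ h₂]

theorem columnNumberOn_le_ncard {k j : ℕ} (hk : 1 ≤ k) (hj : j < l ^ k) :
    columnNumberOn θ l S ≤ (substColumn θ l k j S).ncard :=
  Nat.sInf_le ⟨k, hk, j, hj, rfl⟩

theorem exists_ncard_substColumn_eq_columnNumberOn (hl : 0 < l) (S : Set A) :
    ∃ k, 1 ≤ k ∧ ∃ j < l ^ k, (substColumn θ l k j S).ncard = columnNumberOn θ l S :=
  Nat.sInf_mem (s := {m | ∃ k, 1 ≤ k ∧ ∃ j < l ^ k, (substColumn θ l k j S).ncard = m})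
    ⟨_, 1, le_rfl, 0, by simpa using hl, rfl⟩

theorem columnNumberOn_eq_of_forall_le {n : ℕ}
    (hle : ∀ k j, 1 ≤ k → j < l ^ k → n ≤ (substColumn θ l k j S).ncard)
    (hex : ∃ k, 1 ≤ k ∧ ∃ j < l ^ k, (substColumn θ l k j S).ncard = n) :
    columnNumberOn θ l S = n := by
  obtain ⟨k, hk, j, hj, hn⟩ := hex
  refine le_antisymm (hn ▸ columnNumberOn_le_ncard hk hj) ?_
  refine le_csInf ⟨n, k, hk, j, hj, hn⟩ ?_
  rintro _ ⟨k, hk, j, hj, rfl⟩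
  exact hle k j hk hj

theorem columnNumberOn_le_columnNumberOn_substColumn (hl : 0 < l) {k j : ℕ} (hj : j < l ^ k) :
    columnNumberOn θ l S ≤ columnNumberOn θ l (substColumn θ l k j S) := by
  obtain ⟨k₂, hk₂, j₂, hj₂, hmin⟩ :=
    exists_ncard_substColumn_eq_columnNumberOn (θ := θ) hl (substColumn θ l k j S)
  rw [← hmin, ← substColumn_add hj₂]
  exact columnNumberOn_le_ncard (by omega) (mul_pow_add_lt_pow_add hj hj₂)

variable [Finite A]

theorem columnNumberOn_mono (hl : 0 < l) (hST : S ⊆ T) :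
    columnNumberOn θ l S ≤ columnNumberOn θ l T := by
  obtain ⟨k, hk, j, hj, hmin⟩ := exists_ncard_substColumn_eq_columnNumberOn (θ := θ) hl T
  rw [← hmin]
  exact (columnNumberOn_le_ncard hk hj).trans (ncard_le_ncard (image_mono hST))

theorem injOn_substIter_of_ncard_eq_columnNumberOn {k j k' j' : ℕ} (hk : 1 ≤ k)
    (hj : j < l ^ k) (hmin : (substColumn θ l k j S).ncard = columnNumberOn θ l S)
    (hj' : j' < l ^ k') :
    InjOn (fun a => substIter θ l k' a j') (substColumn θ l k j S) := by
  refine injOn_of_ncard_image_eq (le_antisymm (ncard_image_le (toFinite _)) ?_)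
  calc (substColumn θ l k j S).ncard = columnNumberOn θ l S := hmin
    _ ≤ (substColumn θ l (k + k') (j * l ^ k' + j') S).ncard :=
      columnNumberOn_le_ncard (by omega) (mul_pow_add_lt_pow_add hj hj')
    _ = _ := by rw [substColumn_add hj']; rfl

theorem exists_forall_ncard_substColumn_eq_columnNumberOn (hl : 0 < l) {ι : Type*}
    (S : ι → Set A)
    (hS : ∀ i k j, j < l ^ k →
      columnNumberOn θ l (substColumn θ l k j (S i)) ≤ columnNumberOn θ l (S i))
    (s : Finset ι) :
    ∃ k, 1 ≤ k ∧ ∃ j < l ^ k, ∀ i ∈ s,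
      (substColumn θ l k j (S i)).ncard = columnNumberOn θ l (S i) := by
  classical
  induction s using Finset.induction_on with
  | empty => exact ⟨1, le_rfl, 0, by simpa using hl, by simp⟩
  | insert i s _ ih =>
    obtain ⟨k, hk, j, hj, hs⟩ := ih
    obtain ⟨k₂, hk₂, j₂, hj₂, hi⟩ :=
      exists_ncard_substColumn_eq_columnNumberOn (θ := θ) hl (substColumn θ l k j (S i))
    have hkj := mul_pow_add_lt_pow_add hj hj₂
    refine ⟨k + k₂, by omega, j * l ^ k₂ + j₂, hkj, fun i' hi' => ?_⟩
    rcases Finset.mem_insert.1 hi' with rfl | hi'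
    · refine le_antisymm ?_ (columnNumberOn_le_ncard (by omega) hkj)
      rw [substColumn_add hj₂, hi]
      exact hS _ _ _ hj
    · rw [substColumn_add hj₂, substColumn,
        (injOn_substIter_of_ncard_eq_columnNumberOn hk hj (hs i' hi') hj₂).ncard_image, hs i' hi']

end ColumnNumber

def residueLetters {A : Type*} (u : ℕ → A) (h : ℕ) (c : ZMod h) : Set A :=
  u '' {n | (n : ZMod h) = c}

section ResidueLetters

variable {A : Type*} {u : ℕ → A} {h : ℕ}

theorem residueLetters_natCast_eq_range {q : ℕ} (hq : q < h) :
    residueLetters u h q = range fun m => u (m * h + q) := by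
  ext a
  constructor
  · rintro ⟨n, hn, rfl⟩
    rw [mem_ofPred_eq, ZMod.natCast_eq_natCast_iff', Nat.mod_eq_of_lt hq] at hn
    exact ⟨n / h, by simp only [← hn, Nat.div_add_mod']⟩
  · rintro ⟨m, rfl⟩
    exact ⟨m * h + q, by simp, rfl⟩

theorem iUnion_residueLetters (hu : ∀ a, ∃ n, u n = a) : ⋃ c, residueLetters u h c = univ :=
  eq_univ_of_forall fun a =>
    let ⟨n, hn⟩ := hu a
    mem_iUnion.2 ⟨n, n, rfl, hn⟩

theorem disjoint_residueLetters (hu : ∀ m n, u m = u n → (m : ZMod h) = n) {c c' : ZMod h}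
    (hcc' : c ≠ c') : Disjoint (residueLetters u h c) (residueLetters u h c') := by
  rw [disjoint_left]
  rintro _ ⟨m, rfl, rfl⟩ ⟨n, hn, hmn⟩
  exact hcc' ((hu m n hmn.symm).trans hn)

end ResidueLetters

section Height

variable {A : Type*} {θ : A → ℕ → A} {l : ℕ} {a₀ : A}

theorem substFixedPoint_zero (ha₀ : θ a₀ 0 = a₀) : substFixedPoint θ l a₀ 0 = a₀ :=
  substIter_zero_eq_self ha₀ 1

theorem substFixedPoint_eq_substIter (hl : 1 < l) (ha₀ : θ a₀ 0 = a₀) {n k : ℕ}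
    (hn : n < l ^ k) : substFixedPoint θ l a₀ n = substIter θ l k a₀ n := by
  have stable : ∀ d k, n < l ^ k → substIter θ l (d + k) a₀ n = substIter θ l k a₀ n := by
    intro d k hk
    rw [substIter_add, Nat.div_eq_of_lt hk, Nat.mod_eq_of_lt hk, substIter_zero_eq_self ha₀]
  have hn' : n < l ^ (n + 1) :=
    (Nat.lt_pow_self hl).trans (Nat.pow_lt_pow_right hl n.lt_succ_self)
  show substIter θ l (n + 1) a₀ n = _
  rw [← stable k _ hn', add_comm, stable _ _ hn]

theorem substFixedPoint_mul_pow_add (hl : 1 < l) (ha₀ : θ a₀ 0 = a₀) (n : ℕ) {k j : ℕ}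
    (hj : j < l ^ k) :
    substFixedPoint θ l a₀ (n * l ^ k + j) = substIter θ l k (substFixedPoint θ l a₀ n) j := by
  have hn : n < l ^ n := Nat.lt_pow_self hl
  rw [substFixedPoint_eq_substIter hl ha₀ (mul_pow_add_lt_pow_add hn hj),
    substIter_mul_add θ l _ _ _ hj, substFixedPoint_eq_substIter hl ha₀ hn]

theorem substColumn_residueLetters_subset (hl : 1 < l) (ha₀ : θ a₀ 0 = a₀) {h k j : ℕ}
    (hj : j < l ^ k) (c : ZMod h) :
    substColumn θ l k j (residueLetters (substFixedPoint θ l a₀) h c) ⊆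
      residueLetters (substFixedPoint θ l a₀) h (c * l ^ k + j) := by
  rintro _ ⟨_, ⟨n, rfl, rfl⟩, rfl⟩
  exact ⟨n * l ^ k + j, by simp, substFixedPoint_mul_pow_add hl ha₀ n hj⟩

theorem exists_substFixedPoint_eq (hl : 1 < l) (ha₀ : θ a₀ 0 = a₀) (hθ : SubstPrimitive θ l)
    (a : A) (n₀ : ℕ) :
    ∃ n, n₀ ≤ n ∧ substFixedPoint θ l a₀ n = a := by
  obtain ⟨k, -, hprim⟩ := hθ
  obtain ⟨j, hj, rfl⟩ := hprim (substFixedPoint θ l a₀ n₀) a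
  refine ⟨n₀ * l ^ k + j, ?_, substFixedPoint_mul_pow_add hl ha₀ n₀ hj⟩
  have : n₀ ≤ n₀ * l ^ k := Nat.le_mul_of_pos_right _ (pow_pos (by omega) k)
  omega

theorem substHeight_mem (hl : 1 < l) (ha₀ : θ a₀ 0 = a₀) (hθ : SubstPrimitive θ l) :
    substHeight θ l a₀ ∈ {m : ℕ | 1 ≤ m ∧ Nat.Coprime m l ∧
      ∀ r : ℕ, 1 ≤ r → substFixedPoint θ l a₀ r = substFixedPoint θ l a₀ 0 → m ∣ r} := by
  obtain ⟨r, hr, hr₀⟩ := exists_substFixedPoint_eq hl ha₀ hθ (substFixedPoint θ l a₀ 0) 1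
  refine Nat.sSup_mem ⟨1, le_rfl, Nat.coprime_one_left l, fun r _ _ => one_dvd r⟩ ⟨r, ?_⟩
  rintro m ⟨-, -, hm⟩
  exact Nat.le_of_dvd hr (hm r hr hr₀)

theorem substHeight_pos (hl : 1 < l) (ha₀ : θ a₀ 0 = a₀) (hθ : SubstPrimitive θ l) :
    0 < substHeight θ l a₀ :=
  (substHeight_mem hl ha₀ hθ).1

theorem isUnit_natCast_substHeight (hl : 1 < l) (ha₀ : θ a₀ 0 = a₀) (hθ : SubstPrimitive θ l) :
    IsUnit (l : ZMod (substHeight θ l a₀)) :=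
  (ZMod.isUnit_iff_coprime _ _).2 (substHeight_mem hl ha₀ hθ).2.1.symm

theorem substHeight_dvd_of_substFixedPoint_eq (hl : 1 < l) (ha₀ : θ a₀ 0 = a₀)
    (hθ : SubstPrimitive θ l) {r : ℕ} (hr : substFixedPoint θ l a₀ r = a₀) :
    substHeight θ l a₀ ∣ r := by
  rcases Nat.eq_zero_or_pos r with rfl | hr₀
  · exact dvd_zero _
  · exact (substHeight_mem hl ha₀ hθ).2.2 r hr₀ (by rw [hr, substFixedPoint_zero ha₀])

theorem natCast_eq_of_substFixedPoint_eq (hl : 1 < l) (ha₀ : θ a₀ 0 = a₀)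
    (hθ : SubstPrimitive θ l) {m n : ℕ}
    (hmn : substFixedPoint θ l a₀ m = substFixedPoint θ l a₀ n) :
    (m : ZMod (substHeight θ l a₀)) = n := by
  obtain ⟨k, -, hprim⟩ := id hθ
  obtain ⟨j, hj, hja⟩ := hprim (substFixedPoint θ l a₀ m) a₀
  have hzero : ∀ p, substFixedPoint θ l a₀ p = substFixedPoint θ l a₀ m →
      ((p * l ^ k + j : ℕ) : ZMod (substHeight θ l a₀)) = 0 := fun p hp =>
    (ZMod.natCast_eq_zero_iff _ _).2 <| substHeight_dvd_of_substFixedPoint_eq hl ha₀ hθ <| by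
      rw [substFixedPoint_mul_pow_add hl ha₀ p hj, hp, hja]
  have hm := hzero m rfl
  have hn := hzero n hmn.symm
  push_cast at hm hn
  exact ((isUnit_natCast_substHeight hl ha₀ hθ).pow k).mul_right_cancel
    (by linear_combination hm - hn)

variable [Finite A]

theorem columnNumberOn_residueLetters_le (hl : 1 < l) (ha₀ : θ a₀ 0 = a₀)
    (hθ : SubstPrimitive θ l) (c c' : ZMod (substHeight θ l a₀)) :
    columnNumberOn θ l (residueLetters (substFixedPoint θ l a₀) (substHeight θ l a₀) c) ≤
      columnNumberOn θ l (residueLetters (substFixedPoint θ l a₀) (substHeight θ l a₀) c') := by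
  have : NeZero (substHeight θ l a₀) := ⟨(substHeight_pos hl ha₀ hθ).ne'⟩
  have hj : (c' - c * l ^ substHeight θ l a₀).val < l ^ substHeight θ l a₀ :=
    (ZMod.val_lt _).trans (Nat.lt_pow_self hl)
  calc _ ≤ columnNumberOn θ l (substColumn θ l _ _ _) :=
        columnNumberOn_le_columnNumberOn_substColumn (by omega) hj
    _ ≤ _ := columnNumberOn_mono (by omega) (substColumn_residueLetters_subset hl ha₀ hj c)
    _ = _ := by rw [ZMod.natCast_zmod_val, add_sub_cancel]

theorem columnNumberOn_residueLetters_eq (hl : 1 < l) (ha₀ : θ a₀ 0 = a₀)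
    (hθ : SubstPrimitive θ l) (c c' : ZMod (substHeight θ l a₀)) :
    columnNumberOn θ l (residueLetters (substFixedPoint θ l a₀) (substHeight θ l a₀) c) =
      columnNumberOn θ l (residueLetters (substFixedPoint θ l a₀) (substHeight θ l a₀) c') :=
  le_antisymm (columnNumberOn_residueLetters_le hl ha₀ hθ c c')
    (columnNumberOn_residueLetters_le hl ha₀ hθ c' c)

theorem ncard_substColumn_univ (hl : 1 < l) (ha₀ : θ a₀ 0 = a₀) (hθ : SubstPrimitive θ l)
    {k j : ℕ} (hj : j < l ^ k) :
    (substColumn θ l k j univ).ncard = ∑ᶠ c : ZMod (substHeight θ l a₀),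
      (substColumn θ l k j
        (residueLetters (substFixedPoint θ l a₀) (substHeight θ l a₀) c)).ncard := by
  have : NeZero (substHeight θ l a₀) := ⟨(substHeight_pos hl ha₀ hθ).ne'⟩
  have hu : ∀ a, ∃ n, substFixedPoint θ l a₀ n = a := fun a =>
    (exists_substFixedPoint_eq hl ha₀ hθ a 0).imp fun _ => And.right
  rw [← iUnion_residueLetters hu, substColumn, image_iUnion]
  refine ncard_iUnion_of_finite (fun _ => toFinite _) fun c c' hcc' => ?_
  refine Disjoint.mono (substColumn_residueLetters_subset hl ha₀ hj c)
    (substColumn_residueLetters_subset hl ha₀ hj c')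
    (disjoint_residueLetters (fun _ _ => natCast_eq_of_substFixedPoint_eq hl ha₀ hθ)
      fun he => hcc' ?_)
  exact ((isUnit_natCast_substHeight hl ha₀ hθ).pow k).mul_right_cancel (add_right_cancel he)

theorem columnNumber_eq_substHeight_mul (hl : 1 < l) (ha₀ : θ a₀ 0 = a₀)
    (hθ : SubstPrimitive θ l) :
    columnNumber θ l = substHeight θ l a₀ *
      columnNumberOn θ l (residueLetters (substFixedPoint θ l a₀) (substHeight θ l a₀) 0) := by
  set h := substHeight θ l a₀
  set X := residueLetters (substFixedPoint θ l a₀) h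
  have : NeZero h := ⟨(substHeight_pos hl ha₀ hθ).ne'⟩
  have hX : ∀ c, columnNumberOn θ l (X c) = columnNumberOn θ l (X 0) := fun c =>
    columnNumberOn_residueLetters_eq hl ha₀ hθ c 0
  have hsum : ∀ k j, j < l ^ k →
      (substColumn θ l k j univ).ncard = ∑ c : ZMod h, (substColumn θ l k j (X c)).ncard :=
    fun k j hj => (ncard_substColumn_univ hl ha₀ hθ hj).trans (finsum_eq_sum_of_fintype _)
  have hmul : h * columnNumberOn θ l (X 0) = ∑ c : ZMod h, columnNumberOn θ l (X c) := by
    simp [hX, ZMod.card]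
  obtain ⟨k, hk, j, hj, hmin⟩ := exists_forall_ncard_substColumn_eq_columnNumberOn (θ := θ)
    (by omega) X (fun c k j hj => (columnNumberOn_mono (by omega)
      (substColumn_residueLetters_subset hl ha₀ hj c)).trans_eq ((hX _).trans (hX c).symm))
    Finset.univ
  refine columnNumberOn_eq_of_forall_le (fun k j hk hj => ?_) ⟨k, hk, j, hj, ?_⟩
  · rw [hsum k j hj, hmul]
    exact Finset.sum_le_sum fun c _ => columnNumberOn_le_ncard hk hj
  · rw [hsum k j hj, hmul]
    exact Finset.sum_congr rfl hmin

end Height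

section PureBase

variable {A : Type*} {θ : A → ℕ → A} {l : ℕ} {a₀ : A}

theorem substFixedPoint_mul_add (hl : 1 < l) (ha₀ : θ a₀ 0 = a₀) (n : ℕ) {r : ℕ}
    (hr : r < l) :
    substFixedPoint θ l a₀ (n * l + r) = θ (substFixedPoint θ l a₀ n) r := by
  simpa [substIter, Nat.mod_eq_of_lt hr] using
    substFixedPoint_mul_pow_add hl ha₀ n (k := 1) (j := r) (by simpa using hr)

theorem pureBase_block (hl : 1 < l) (ha₀ : θ a₀ 0 = a₀) {h j : ℕ} (hj : j < l) (m : ℕ) :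
    pureBase θ l h (fun i : Fin h => substFixedPoint θ l a₀ (m * h + i)) j =
      fun i : Fin h => substFixedPoint θ l a₀ ((m * l + j) * h + i) := by
  funext i
  have hq : (j * h + i) / l < h := by
    rw [Nat.div_lt_iff_lt_mul (by omega)]
    calc j * h + i < (j + 1) * h := by rw [add_mul, one_mul]; omega
      _ ≤ h * l := by rw [mul_comm h]; exact Nat.mul_le_mul_right _ hj
  simp only [pureBase, Nat.mod_eq_of_lt hq]
  rw [← substFixedPoint_mul_add hl ha₀ _ (Nat.mod_lt _ (by omega))]
  congr 1
  linarith [Nat.div_add_mod (j * h + i) l]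

theorem substIter_pureBase_block (hl : 1 < l) (ha₀ : θ a₀ 0 = a₀) {h k j : ℕ} (hj : j < l ^ k)
    (m : ℕ) :
    substIter (pureBase θ l h) l k (fun i : Fin h => substFixedPoint θ l a₀ (m * h + i)) j =
      fun i : Fin h => substFixedPoint θ l a₀ ((m * l ^ k + j) * h + i) := by
  induction k generalizing j with
  | zero =>
    obtain rfl : j = 0 := by simpa using hj
    simp [substIter]
  | succ k ih =>
    have hjl : j / l < l ^ k := by
      rw [Nat.div_lt_iff_lt_mul (by omega), ← pow_succ]
      exact hj
    have e : (m * l ^ k + j / l) * l + j % l = m * l ^ (k + 1) + j := by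
      rw [pow_succ]
      linarith [Nat.div_add_mod j l]
    rw [substIter, ih hjl, pureBase_block hl ha₀ (Nat.mod_lt _ (by omega)), e]

theorem substColumn_pureBase (hl : 1 < l) (ha₀ : θ a₀ 0 = a₀) {h k j : ℕ} (hj : j < l ^ k) :
    substColumn (pureBase θ l h) l k j
        {w : Fin h → A | ∃ m : ℕ, ∀ i : Fin h, w i = substFixedPoint θ l a₀ (m * h + i.val)} =
      range fun m (i : Fin h) => substFixedPoint θ l a₀ ((m * l ^ k + j) * h + i) := by
  have hB : {w : Fin h → A | ∃ m : ℕ, ∀ i : Fin h, w i = substFixedPoint θ l a₀ (m * h + i.val)}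
      = range fun m (i : Fin h) => substFixedPoint θ l a₀ (m * h + i) := by
    ext w
    simp [funext_iff, eq_comm]
  rw [hB, substColumn, ← range_comp]
  exact congrArg range (funext fun m => substIter_pureBase_block hl ha₀ hj m)

variable [Finite A]

/-- The first letters of a column of the pure base form a column of a residue class. -/
theorem columnNumberOn_residueLetters_le_ncard_pureBase (hl : 1 < l) (ha₀ : θ a₀ 0 = a₀)
    (hθ : SubstPrimitive θ l) {k j : ℕ} (hk : 1 ≤ k) (hj : j < l ^ k) :
    columnNumberOn θ l (residueLetters (substFixedPoint θ l a₀) (substHeight θ l a₀) 0) ≤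
      (substColumn (pureBase θ l (substHeight θ l a₀)) l k j
        {w : Fin (substHeight θ l a₀) → A | ∃ m : ℕ, ∀ i : Fin (substHeight θ l a₀),
          w i = substFixedPoint θ l a₀ (m * substHeight θ l a₀ + i.val)}).ncard := by
  have hpos := substHeight_pos hl ha₀ hθ
  have hq : j * substHeight θ l a₀ / l ^ k < substHeight θ l a₀ :=
    Nat.div_lt_of_lt_mul (Nat.mul_lt_mul_of_pos_right hj hpos)
  have hr : j * substHeight θ l a₀ % l ^ k < l ^ k := Nat.mod_lt _ (by omega)
  calc _ = columnNumberOn θ l (residueLetters (substFixedPoint θ l a₀) (substHeight θ l a₀)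
          (j * substHeight θ l a₀ / l ^ k : ℕ)) := columnNumberOn_residueLetters_eq hl ha₀ hθ _ _
    _ ≤ (substColumn θ l k _ _).ncard := columnNumberOn_le_ncard hk hr
    _ = ((fun w => w ⟨0, hpos⟩) ''
          substColumn (pureBase θ l (substHeight θ l a₀)) l k j _).ncard := by
        rw [substColumn_pureBase hl ha₀ hj, residueLetters_natCast_eq_range hq, substColumn,
          ← range_comp, ← range_comp]
        refine congrArg (fun s => ncard (range s)) (funext fun m => ?_)
        simp only [Function.comp_apply]
        rw [← substFixedPoint_mul_pow_add hl ha₀ _ hr]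
        congr 1
        linarith [Nat.div_add_mod (j * substHeight θ l a₀) (l ^ k)]
    _ ≤ _ := ncard_image_le (toFinite _)

/-- Take a minimal column `θ^{k₁}(A_0)_{j₁}` and `k₂ = 2h`. The `h`-blocks of `u` starting at the
first multiple `(q + 1) h` of `h` after `j₁ l^{k₂}` lie inside `θ^{k₂}` of single letters of that
column, and by minimality their first letters already determine those letters. -/
theorem exists_ncard_substColumn_pureBase_eq (hl : 1 < l) (ha₀ : θ a₀ 0 = a₀)
    (hθ : SubstPrimitive θ l) :
    ∃ k, 1 ≤ k ∧ ∃ j < l ^ k,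
      (substColumn (pureBase θ l (substHeight θ l a₀)) l k j
        {w : Fin (substHeight θ l a₀) → A | ∃ m : ℕ, ∀ i : Fin (substHeight θ l a₀),
          w i = substFixedPoint θ l a₀ (m * substHeight θ l a₀ + i.val)}).ncard =
      columnNumberOn θ l (residueLetters (substFixedPoint θ l a₀) (substHeight θ l a₀) 0) := by
  have hpos := substHeight_pos hl ha₀ hθ
  obtain ⟨k₁, hk₁, j₁, hj₁, hmin⟩ :=
    exists_ncard_substColumn_eq_columnNumberOn (θ := θ) (l := l) (by omega)
      (residueLetters (substFixedPoint θ l a₀) (substHeight θ l a₀) 0)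
  set h := substHeight θ l a₀
  obtain ⟨q, r, hr, hqr⟩ : ∃ q r, r < h ∧ j₁ * l ^ (2 * h) = q * h + r :=
    ⟨_, _, Nat.mod_lt _ hpos, (Nat.div_add_mod' _ _).symm⟩
  have hjh : (q + 1) * h = j₁ * l ^ (2 * h) + (h - r) := by
    rw [hqr, add_mul, one_mul]
    omega
  have hoffset : ∀ i : Fin h, h - r + i < l ^ (2 * h) := fun i =>
    lt_of_lt_of_le (by omega) (Nat.lt_pow_self hl).le
  have hj : q + 1 < l ^ (k₁ + 2 * h) := by
    have := mul_pow_add_lt_pow_add hj₁ (hoffset ⟨0, hpos⟩)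
    have := Nat.le_mul_of_pos_right (q + 1) hpos
    omega
  have himage : substColumn (pureBase θ l h) l (k₁ + 2 * h) (q + 1)
      {w : Fin h → A | ∃ m : ℕ, ∀ i : Fin h, w i = substFixedPoint θ l a₀ (m * h + i.val)} =
      (fun x (i : Fin h) => substIter θ l (2 * h) x (h - r + i)) ''
        substColumn θ l k₁ j₁ (residueLetters (substFixedPoint θ l a₀) h 0) := by
    have hA := residueLetters_natCast_eq_range (u := substFixedPoint θ l a₀) hpos
    rw [Nat.cast_zero] at hA
    rw [substColumn_pureBase hl ha₀ hj, hA, substColumn, ← range_comp, ← range_comp]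
    refine congrArg range (funext fun m => funext fun i => ?_)
    simp only [Function.comp_apply]
    rw [← substIter_mul_add θ l k₁ _ _ (hoffset i),
      ← substFixedPoint_mul_pow_add hl ha₀ _ (mul_pow_add_lt_pow_add hj₁ (hoffset i))]
    congr 1
    linarith
  refine ⟨k₁ + 2 * h, by omega, q + 1, hj, ?_⟩
  rw [himage, InjOn.ncard_image, hmin]
  intro x hx y hy hxy
  exact injOn_substIter_of_ncard_eq_columnNumberOn hk₁ hj₁ hmin (hoffset ⟨0, hpos⟩) hx hy
    (congrFun hxy ⟨0, hpos⟩)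

theorem columnNumberOn_pureBase (hl : 1 < l) (ha₀ : θ a₀ 0 = a₀) (hθ : SubstPrimitive θ l) :
    columnNumberOn (pureBase θ l (substHeight θ l a₀)) l
        {w : Fin (substHeight θ l a₀) → A | ∃ m : ℕ, ∀ i : Fin (substHeight θ l a₀),
          w i = substFixedPoint θ l a₀ (m * substHeight θ l a₀ + i.val)} =
      columnNumberOn θ l (residueLetters (substFixedPoint θ l a₀) (substHeight θ l a₀) 0) :=
  columnNumberOn_eq_of_forall_le
    (fun _ _ hk hj => columnNumberOn_residueLetters_le_ncard_pureBase hl ha₀ hθ hk hj)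
    (exists_ncard_substColumn_pureBase_eq hl ha₀ hθ)

end PureBase

/-- For a primitive substitution `θ` of constant length with height
`h = h(θ)` and pure base `θ^{(h)}` (a substitution on the set of length-`h` blocks of
the fixed point `u` starting at multiples of `h`), one has
`c(θ) = h(θ) · c(θ^{(h)})`; in particular `h(θ) ∣ c(θ)`. -/
theorem columnNumber_eq_height_mul_pureBase_columnNumber
    {A : Type*} [Finite A] (l : ℕ) (hl : 2 ≤ l)
    (θ : A → ℕ → A) (hθ : SubstPrimitive θ l)
    (a₀ : A) (ha₀ : θ a₀ 0 = a₀) :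
    columnNumber θ l =
      substHeight θ l a₀ *
        columnNumberOn (pureBase θ l (substHeight θ l a₀)) l
          { w : Fin (substHeight θ l a₀) → A |
            ∃ m : ℕ, ∀ i : Fin (substHeight θ l a₀),
              w i = substFixedPoint θ l a₀ (m * substHeight θ l a₀ + i.val) } ∧
    substHeight θ l a₀ ∣ columnNumber θ l := by
  rw [columnNumber_eq_substHeight_mul hl ha₀ hθ, columnNumberOn_pureBase hl ha₀ hθ]
  exact ⟨rfl, dvd_mul_right _ _⟩
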